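/- arXiv:2601.19323 — 9 statements merged into one kernel-verified Lean document; each statement's English description precedes it below -/
import Mathlib

section
/- Let r ≥ 1 be real and let U be uniformly distributed on (0,1). Then for any real w ≠ 0 and any y > 0, y^r · P(|Uw| > y) ≤ (r/(r+1))^r · E[|Uw|^r]. -/
/-! Since `U` is uniform on `(0, 1)`, with `t = y / |w|` the tail probability is `max (1 - t) 0`
and `E |Uw|^r = |w|^r / (r + 1)`. The claim thus reduces to `t^r (1 - t) ≤ a^r (1 - a)` for
`a = r / (r + 1)`, the maximiser of `t ↦ t^r (1 - t)` on `[0, 1]`; this is the weighted AM-GM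
inequality for `t / a` and `(1 - t) / (1 - a)` with weights `a` and `1 - a`, raised to the power
`r + 1`. -/

open MeasureTheory Set

lemma rpow_mul_one_sub_le {r t : ℝ} (hr : 0 < r) (ht₀ : 0 ≤ t) (ht₁ : t ≤ 1) :
    t ^ r * (1 - t) ≤ (r / (r + 1)) ^ r * (1 - r / (r + 1)) := by
  set a := r / (r + 1)
  have hr₁ : 0 < r + 1 := by linarith
  have ha₀ : 0 < a := by positivity
  have ha_mul : a * (r + 1) = r := div_mul_cancel₀ _ hr₁.ne'
  have ha₁_mul : (1 - a) * (r + 1) = 1 := by rw [sub_mul, ha_mul]; ring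
  have ha₁ : 0 < 1 - a := pos_of_mul_pos_left (by rw [ha₁_mul]; exact one_pos) hr₁.le
  have amgm : (t / a) ^ a * ((1 - t) / (1 - a)) ^ (1 - a) ≤ 1 := by
    have := Real.geom_mean_le_arith_mean2_weighted ha₀.le ha₁.le (div_nonneg ht₀ ha₀.le)
      (div_nonneg (sub_nonneg.2 ht₁) ha₁.le) (add_sub_cancel a 1)
    rwa [mul_div_cancel₀ _ ha₀.ne', mul_div_cancel₀ _ ha₁.ne', add_sub_cancel] at this
  have key : (t / a) ^ r * ((1 - t) / (1 - a)) ≤ 1 := by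
    have hpow := Real.rpow_le_one (by positivity) amgm hr₁.le
    rwa [Real.mul_rpow (by positivity) (by positivity), ← Real.rpow_mul (by positivity),
      ← Real.rpow_mul (by positivity), ha_mul, ha₁_mul, Real.rpow_one] at hpow
  rwa [Real.div_rpow ht₀ ha₀.le, div_mul_div_comm, div_le_one (by positivity)] at key

lemma rpow_mul_max_one_sub_div_le {r y c : ℝ} (hr : 0 < r) (hy : 0 ≤ y) (hc : 0 < c) :
    y ^ r * max (1 - y / c) 0 ≤ (r / (r + 1)) ^ r * (c ^ r / (r + 1)) := by
  rcases le_total (y / c) 1 with h | h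
  · have hy_eq : y ^ r = (y / c) ^ r * c ^ r := by
      rw [← Real.mul_rpow (by positivity) hc.le, div_mul_cancel₀ _ hc.ne']
    have h_one_sub : 1 - r / (r + 1) = 1 / (r + 1) := by field_simp; ring
    have := mul_le_mul_of_nonneg_right (rpow_mul_one_sub_le hr (by positivity) h)
      (Real.rpow_nonneg hc.le r)
    rw [max_eq_left (sub_nonneg.2 h), hy_eq]
    calc (y / c) ^ r * c ^ r * (1 - y / c) = (y / c) ^ r * (1 - y / c) * c ^ r := by ring
      _ ≤ (r / (r + 1)) ^ r * (1 - r / (r + 1)) * c ^ r := this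
      _ = (r / (r + 1)) ^ r * (c ^ r / (r + 1)) := by rw [h_one_sub]; ring
  · rw [max_eq_right (sub_nonpos.2 h), mul_zero]
    positivity

lemma setIntegral_Ioo_zero_one_rpow {r : ℝ} (hr : -1 < r) :
    ∫ x in Ioo (0 : ℝ) 1, x ^ r = 1 / (r + 1) := by
  rw [← integral_Ioc_eq_integral_Ioo, ← intervalIntegral.integral_of_le zero_le_one,
    integral_rpow (Or.inl hr), Real.one_rpow, Real.zero_rpow (by linarith), sub_zero]

section UniformLaw

variable {Ω : Type*} [MeasurableSpace Ω] {μ : Measure Ω} {U : Ω → ℝ}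

lemma inter_Ioo_zero_one_eq {y c : ℝ} (hy : 0 ≤ y) (hc : 0 < c) :
    {x : ℝ | y < |x| * c} ∩ Ioo 0 1 = Ioo (y / c) 1 := by
  ext x
  simp only [mem_inter_iff, mem_ofPred_eq, mem_Ioo, div_lt_iff₀ hc]
  constructor
  · rintro ⟨h, hx, hx₁⟩
    exact ⟨by rwa [abs_of_pos hx] at h, hx₁⟩
  · rintro ⟨h, hx₁⟩
    have hx : 0 < x := pos_of_mul_pos_left (hy.trans_lt h) hc.le
    exact ⟨by rwa [abs_of_pos hx], hx, hx₁⟩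

lemma measure_lt_abs_mul_eq (hU : Measurable U)
    (hUlaw : μ.map U = volume.restrict (Ioo 0 1)) {y w : ℝ} (hy : 0 ≤ y) (hw : w ≠ 0) :
    μ {ω | y < |U ω * w|} = ENNReal.ofReal (1 - y / |w|) := by
  have hs : MeasurableSet {x : ℝ | y < |x| * |w|} :=
    measurableSet_lt measurable_const (measurable_id.abs.mul_const _)
  have hpre : {ω | y < |U ω * w|} = U ⁻¹' {x | y < |x| * |w|} := by simp only [abs_mul]; rfl
  rw [hpre, ← Measure.map_apply hU hs, hUlaw, Measure.restrict_apply hs,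
    inter_Ioo_zero_one_eq hy (abs_pos.2 hw), Real.volume_Ioo]

lemma integral_abs_mul_rpow (hU : Measurable U)
    (hUlaw : μ.map U = volume.restrict (Ioo 0 1)) {r : ℝ} (hr : -1 < r) (w : ℝ) :
    ∫ ω, |U ω * w| ^ r ∂μ = |w| ^ r / (r + 1) := by
  have hf : AEStronglyMeasurable (fun x : ℝ => |x * w| ^ r) (μ.map U) :=
    ((measurable_id.mul_const w).abs.pow_const r).aestronglyMeasurable
  rw [← integral_map hU.aemeasurable hf, hUlaw]
  calc ∫ x in Ioo (0 : ℝ) 1, |x * w| ^ r = ∫ x in Ioo (0 : ℝ) 1, x ^ r * |w| ^ r := by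
        refine setIntegral_congr_fun measurableSet_Ioo fun x hx => ?_
        rw [abs_mul, abs_of_pos hx.1, Real.mul_rpow hx.1.le (abs_nonneg w)]
    _ = |w| ^ r / (r + 1) := by
        rw [integral_mul_const, setIntegral_Ioo_zero_one_rpow hr]; ring

end UniformLaw

theorem stmt_1_general {Ω : Type*} [MeasurableSpace Ω] (μ : Measure Ω)
    (U : Ω → ℝ) (hU : Measurable U)
    (hUlaw : Measure.map U μ = volume.restrict (Set.Ioo (0 : ℝ) 1))
    (r : ℝ) (hr : 1 ≤ r) (w : ℝ) (hw : w ≠ 0) (y : ℝ) (hy : 0 < y) :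
    y ^ r * (μ {ω | y < |U ω * w|}).toReal ≤
      (r / (r + 1)) ^ r * ∫ ω, |U ω * w| ^ r ∂μ := by
  rw [measure_lt_abs_mul_eq hU hUlaw hy.le hw, integral_abs_mul_rpow hU hUlaw (by linarith) w,
    ENNReal.toReal_ofReal']
  exact rpow_mul_max_one_sub_div_le (by linarith) hy.le (abs_pos.2 hw)

theorem stmt_1 {Ω : Type*} [MeasurableSpace Ω] (μ : Measure Ω) [IsProbabilityMeasure μ]
    (U : Ω → ℝ) (hU : Measurable U)
    (hUlaw : Measure.map U μ = volume.restrict (Set.Ioo (0 : ℝ) 1))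
    (r : ℝ) (hr : 1 ≤ r) (w : ℝ) (hw : w ≠ 0) (y : ℝ) (hy : 0 < y) :
    y ^ r * (μ {ω | y < |U ω * w|}).toReal ≤
      (r / (r + 1)) ^ r * ∫ ω, |U ω * w| ^ r ∂μ :=
  stmt_1_general μ U hU hUlaw r hr w hw y hy
end

section
/- Let r ≥ 2, φ ∈ [0,1], b ∈ ℝ, and let (p_n)_{n∈ℤ} be a nonnegative doubly infinite sequence. Then ∑_{n∈ℤ} min{(1-φ)·p_{n-1}, φ·p_n} ≤ 2^{r-2} · ∑_{n∈ℤ} |b + n|^r · p_n. -/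
open Real

lemma key_min_le (r : ℝ) (hr : 2 ≤ r) (φ : ℝ) (hφ0 : 0 ≤ φ) (hφ1 : φ ≤ 1)
    (u v p q : ℝ) (hu : 0 ≤ u) (hv : 0 ≤ v) (huv : u + v = 1)
    (hp : 0 ≤ p) (hq : 0 ≤ q) :
    min ((1 - φ) * p) (φ * q) ≤ (2:ℝ) ^ (r - 2) * (u ^ r * p + v ^ r * q) := by
  rcases eq_or_lt_of_le (add_nonneg hp hq) with h0 | h0
  · have hp0 : p = 0 := by linarith
    have hq0 : q = 0 := by linarith
    simp [hp0, hq0]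
  set s : ℝ := r / 2 with hs_def
  have hs1 : 1 ≤ s := by rw [hs_def]; linarith
  have hpm : (2:ℝ) ^ (1 - s) ≤ u ^ s + v ^ s := by
    have hcv := (convexOn_rpow hs1).2 (Set.mem_Ici.2 hu) (Set.mem_Ici.2 hv)
      (by norm_num : (0:ℝ) ≤ 1/2) (by norm_num : (0:ℝ) ≤ 1/2) (by norm_num)
    simp only [smul_eq_mul] at hcv
    have h12 : (1:ℝ)/2 * u + 1/2 * v = 1/2 := by linarith
    rw [h12] at hcv
    have h2 : ((1:ℝ)/2) ^ s = (2:ℝ) ^ (-s) := by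
      rw [one_div, Real.inv_rpow (by norm_num), ← Real.rpow_neg (by norm_num)]
    have h3 : (2:ℝ) ^ (1 - s) = 2 * (2:ℝ) ^ (-s) := by
      rw [show (1:ℝ) - s = 1 + (-s) by ring, Real.rpow_add (by norm_num), Real.rpow_one]
    rw [h3, ← h2]
    linarith
  set a := (2:ℝ) ^ ((r-2)/2) * u ^ s with ha_def
  set c := (2:ℝ) ^ ((r-2)/2) * v ^ s with hc_def
  have ha0 : 0 ≤ a := mul_nonneg (Real.rpow_nonneg (by norm_num) _) (Real.rpow_nonneg hu _)
  have hc0 : 0 ≤ c := mul_nonneg (Real.rpow_nonneg (by norm_num) _) (Real.rpow_nonneg hv _)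
  have hac : 1 ≤ a + c := by
    have he : a + c = (2:ℝ)^((r-2)/2) * (u^s + v^s) := by rw [ha_def, hc_def]; ring
    have h4 : (2:ℝ)^((r-2)/2) * (2:ℝ)^(1-s) = 1 := by
      rw [← Real.rpow_add (by norm_num)]
      rw [show (r-2)/2 + (1-s) = 0 by rw [hs_def]; ring, Real.rpow_zero]
    have h5 : (2:ℝ)^((r-2)/2) * (2:ℝ)^(1-s) ≤ (2:ℝ)^((r-2)/2) * (u^s + v^s) :=
      mul_le_mul_of_nonneg_left hpm (Real.rpow_nonneg (by norm_num) _)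
    rw [he]; rw [h4] at h5; exact h5
  have hsq : ∀ x : ℝ, 0 ≤ x → ((2:ℝ)^((r-2)/2) * x ^ s)^2 = (2:ℝ)^(r-2) * x ^ r := by
    intro x hx
    rw [mul_pow, ← Real.rpow_natCast ((2:ℝ)^((r-2)/2)) 2, ← Real.rpow_natCast (x^s) 2,
      ← Real.rpow_mul (by norm_num : (0:ℝ) ≤ 2), ← Real.rpow_mul hx]
    push_cast
    rw [show (r-2)/2 * 2 = r - 2 by ring, show s * 2 = r by rw [hs_def]; ring]
  have ha2 : a^2 = (2:ℝ)^(r-2) * u ^ r := hsq u hu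
  have hc2 : c^2 = (2:ℝ)^(r-2) * v ^ r := hsq v hv
  have hm1 : min ((1-φ)*p) (φ*q) * (p + q) ≤ p * q := by
    have h1 : min ((1-φ)*p) (φ*q) * p ≤ (φ*q) * p :=
      mul_le_mul_of_nonneg_right (min_le_right _ _) hp
    have h2 : min ((1-φ)*p) (φ*q) * q ≤ ((1-φ)*p) * q :=
      mul_le_mul_of_nonneg_right (min_le_left _ _) hq
    nlinarith [h1, h2]
  have hmin0 : 0 ≤ min ((1-φ)*p) (φ*q) :=
    le_min (mul_nonneg (by linarith) hp) (mul_nonneg hφ0 hq)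
  have h5 : 1 ≤ (a+c)^2 := by nlinarith [hac, ha0, hc0]
  have key2 : p * q ≤ (a^2*p + c^2*q) * (p+q) := by
    nlinarith [sq_nonneg (a*p - c*q), mul_nonneg hp hq, h5]
  rw [show (2:ℝ)^(r-2) * (u^r*p + v^r*q) = ((2:ℝ)^(r-2)*u^r)*p + ((2:ℝ)^(r-2)*v^r)*q by ring,
    ← ha2, ← hc2]
  nlinarith [hm1, key2, h0, hmin0]

theorem stmt_3 (r : ℝ) (hr : 2 ≤ r) (φ : ℝ) (hφ0 : 0 ≤ φ) (hφ1 : φ ≤ 1)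
    (b : ℝ) (p : ℤ → ℝ) (hp : ∀ n, 0 ≤ p n) :
    ∑' n : ℤ, ENNReal.ofReal (min ((1 - φ) * p (n - 1)) (φ * p n)) ≤
      ENNReal.ofReal ((2 : ℝ) ^ (r - 2)) *
        ∑' n : ℤ, ENNReal.ofReal (|b + (n : ℝ)| ^ r * p n) := by
  classical
  set C : ℝ := (2:ℝ) ^ (r - 2) with hC_def
  have hC1 : (1:ℝ) ≤ C := Real.one_le_rpow one_le_two (by linarith)
  set N : ℤ := ⌊-b⌋ with hN_def
  set u : ℝ := Int.fract (-b) with hu_def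
  have hu0 : 0 ≤ u := Int.fract_nonneg _
  have hu1 : u < 1 := Int.fract_lt_one _
  have hbN : b + (N:ℝ) = -u := by
    rw [hu_def, hN_def, Int.fract]; ring
  have htN : |b + (N:ℝ)| = u := by rw [hbN, abs_neg, abs_of_nonneg hu0]
  have htN1 : |b + ((N + 1 : ℤ):ℝ)| = 1 - u := by
    push_cast
    rw [show b + ((N:ℝ) + 1) = -u + 1 by rw [← hbN]; ring]
    rw [abs_of_nonneg (by linarith)]; ring
  have hfar : ∀ n : ℤ, n ≠ N → n ≠ N + 1 → 1 ≤ |b + (n:ℝ)| := by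
    intro n h1 h2
    rcases lt_or_gt_of_ne h1 with h | h
    · have hle : (n:ℝ) ≤ (N:ℝ) - 1 := by
        have : n ≤ N - 1 := by omega
        exact_mod_cast this
      have hbn : b + (n:ℝ) ≤ -1 := by
        have := hbN; linarith
      rw [abs_of_nonpos (by linarith)]; linarith
    · have hge : (N:ℝ) + 2 ≤ (n:ℝ) := by
        have : N + 2 ≤ n := by omega
        exact_mod_cast this
      have hbn : 1 ≤ b + (n:ℝ) := by
        have := hbN; linarith
      rw [abs_of_nonneg (by linarith)]; linarith
  set g : ℤ → ℝ := fun n => C * (|b + (n:ℝ)| ^ r * p n) with hg_def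
  have hg0 : ∀ n, 0 ≤ g n := fun n =>
    mul_nonneg (by linarith)
      (mul_nonneg (Real.rpow_nonneg (abs_nonneg _) _) (hp n))
  have hgfar : ∀ n : ℤ, n ≠ N → n ≠ N + 1 → p n ≤ g n := by
    intro n h1 h2
    have ht : 1 ≤ |b + (n:ℝ)| ^ r := Real.one_le_rpow (hfar n h1 h2) (by linarith)
    have h3 : p n ≤ |b + (n:ℝ)| ^ r * p n := le_mul_of_one_le_left (hp n) ht
    have h4 : |b + (n:ℝ)| ^ r * p n ≤ C * (|b + (n:ℝ)| ^ r * p n) :=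
      le_mul_of_one_le_left (mul_nonneg (Real.rpow_nonneg (abs_nonneg _) _) (hp n)) hC1
    calc p n ≤ |b + (n:ℝ)| ^ r * p n := h3
      _ ≤ g n := h4
  set A : ℤ → ℝ := fun n =>
    if n = N then 1 - φ else if n = N+1 then 1 else if n = N+2 then 0 else (1-φ)/2 with hA_def
  set B : ℤ → ℝ := fun n =>
    if n = N then 0 else if n = N+1 then 1 else if n = N+2 then φ else φ/2 with hB_def
  have hA0 : ∀ n, 0 ≤ A n := by
    intro n; rw [hA_def]; dsimp only; split_ifs <;> linarith
  have hB0 : ∀ n, 0 ≤ B n := by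
    intro n; rw [hB_def]; dsimp only; split_ifs <;> linarith
  have hAB : ∀ n : ℤ, A (n+1) + B n ≤ 1 := by
    intro n; rw [hA_def, hB_def]; dsimp only
    split_ifs <;> first | linarith | omega
  have hpoint : ∀ n : ℤ, min ((1 - φ) * p (n-1)) (φ * p n) ≤ A n * g (n-1) + B n * g n := by
    intro n
    by_cases h1 : n = N
    · subst h1
      have hAN : A N = 1 - φ := by rw [hA_def]; simp
      have hBN : B N = 0 := by rw [hB_def]; simp
      rw [hAN, hBN]
      have hgl := hgfar (N-1) (by omega) (by omega)
      have h2 : (1-φ) * p (N-1) ≤ (1-φ) * g (N-1) :=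
        mul_le_mul_of_nonneg_left hgl (by linarith)
      have h3 := min_le_left ((1-φ) * p (N-1)) (φ * p N)
      linarith
    by_cases h2 : n = N + 1
    · subst h2
      have hAN : A (N+1) = 1 := by rw [hA_def]; simp [show N + 1 ≠ N by omega]
      have hBN : B (N+1) = 1 := by rw [hB_def]; simp [show N + 1 ≠ N by omega]
      rw [hAN, hBN, one_mul, one_mul]
      have hk := key_min_le r hr φ hφ0 hφ1 u (1-u) (p N) (p (N+1)) hu0 (by linarith)
        (by ring) (hp N) (hp (N+1))
      have hidx : (N + 1 : ℤ) - 1 = N := by omega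
      rw [hidx]
      have hgN : g N = C * (u ^ r * p N) := by rw [hg_def]; dsimp only; rw [htN]
      have hgN1 : g (N+1) = C * ((1-u) ^ r * p (N+1)) := by
        rw [hg_def]; dsimp only; rw [htN1]
      rw [hgN, hgN1]
      calc min ((1-φ) * p N) (φ * p (N+1))
          ≤ C * (u ^ r * p N + (1-u) ^ r * p (N+1)) := hk
        _ = C * (u ^ r * p N) + C * ((1-u) ^ r * p (N+1)) := by ring
    by_cases h3 : n = N + 2
    · subst h3
      have hAN : A (N+2) = 0 := by rw [hA_def]; simp [show N + 2 ≠ N by omega, show N + 2 ≠ N + 1 by omega]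
      have hBN : B (N+2) = φ := by rw [hB_def]; simp [show N + 2 ≠ N by omega, show N + 2 ≠ N + 1 by omega]
      rw [hAN, hBN]
      have hgl := hgfar (N+2) (by omega) (by omega)
      have h4 : φ * p (N+2) ≤ φ * g (N+2) := mul_le_mul_of_nonneg_left hgl hφ0
      have h5 := min_le_right ((1-φ) * p (N+2-1)) (φ * p (N+2))
      have h6 := hg0 (N+2-1)
      linarith
    · have hAN : A n = (1-φ)/2 := by rw [hA_def]; simp [h1, h2, h3]
      have hBN : B n = φ/2 := by rw [hB_def]; simp [h1, h2, h3]
      rw [hAN, hBN]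
      have hg1 := hgfar (n-1) (by omega) (by omega)
      have hg2 := hgfar n h1 h2
      have ha : (1-φ) * p (n-1) ≤ (1-φ) * g (n-1) :=
        mul_le_mul_of_nonneg_left hg1 (by linarith)
      have hb : φ * p n ≤ φ * g n := mul_le_mul_of_nonneg_left hg2 hφ0
      have h4 := min_le_left ((1-φ) * p (n-1)) (φ * p n)
      have h5 := min_le_right ((1-φ) * p (n-1)) (φ * p n)
      linarith
  calc ∑' n : ℤ, ENNReal.ofReal (min ((1 - φ) * p (n - 1)) (φ * p n))
      ≤ ∑' n : ℤ, (ENNReal.ofReal (A n * g (n-1)) + ENNReal.ofReal (B n * g n)) := by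
        apply ENNReal.tsum_le_tsum
        intro n
        calc ENNReal.ofReal (min ((1 - φ) * p (n - 1)) (φ * p n))
            ≤ ENNReal.ofReal (A n * g (n-1) + B n * g n) :=
              ENNReal.ofReal_le_ofReal (hpoint n)
          _ = ENNReal.ofReal (A n * g (n-1)) + ENNReal.ofReal (B n * g n) :=
              ENNReal.ofReal_add (mul_nonneg (hA0 n) (hg0 _)) (mul_nonneg (hB0 n) (hg0 _))
    _ = (∑' n : ℤ, ENNReal.ofReal (A n * g (n-1))) + ∑' n : ℤ, ENNReal.ofReal (B n * g n) :=
        ENNReal.tsum_add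
    _ = (∑' n : ℤ, ENNReal.ofReal (A (n+1) * g n)) + ∑' n : ℤ, ENNReal.ofReal (B n * g n) := by
        congr 1
        rw [← (Equiv.addRight (1:ℤ)).tsum_eq (fun n => ENNReal.ofReal (A n * g (n-1)))]
        apply tsum_congr
        intro n
        simp only [Equiv.coe_addRight, add_sub_cancel_right]
    _ = ∑' n : ℤ, (ENNReal.ofReal (A (n+1) * g n) + ENNReal.ofReal (B n * g n)) :=
        ENNReal.tsum_add.symm
    _ = ∑' n : ℤ, ENNReal.ofReal ((A (n+1) + B n) * g n) := by
        apply tsum_congr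
        intro n
        rw [← ENNReal.ofReal_add (mul_nonneg (hA0 _) (hg0 _)) (mul_nonneg (hB0 _) (hg0 _)),
          add_mul]
    _ ≤ ∑' n : ℤ, ENNReal.ofReal (g n) := by
        apply ENNReal.tsum_le_tsum
        intro n
        apply ENNReal.ofReal_le_ofReal
        exact mul_le_of_le_one_left (hg0 n) (hAB n)
    _ = ∑' n : ℤ, ENNReal.ofReal C * ENNReal.ofReal (|b + (n:ℝ)| ^ r * p n) := by
        apply tsum_congr
        intro n
        rw [hg_def]; dsimp only
        rw [ENNReal.ofReal_mul (by linarith : (0:ℝ) ≤ C)]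
    _ = ENNReal.ofReal C * ∑' n : ℤ, ENNReal.ofReal (|b + (n:ℝ)| ^ r * p n) :=
        ENNReal.tsum_mul_left
end

section
/- Let r ≥ 1, b ∈ ℝ, and let (p_n)_{n∈ℤ} be a nonnegative doubly infinite sequence. Then (1/2)·∑_{n∈ℤ} min{p_{n-1}, p_n} ≤ 2^{r-2} · ∑_{n∈ℤ} |b + n|^r · p_n. -/
/-!
Think of `n` as the edge joining the vertices `n - 1` and `n`, and put `N = ⌈-b⌉`, so that
`N - 1` and `N` are the only vertices with `|b + k| < 1`. Charge each edge `n ≠ N` to one of its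
endpoints: to `n - 1` if `n < N`, to `n` if `n > N`. Together with `N ↦ N - 1` this is a bijection
from edges onto the vertices other than `N`, and every charged vertex has weight `|b + k| ^ r ≥ 1`.
The edge `N` is charged to both of its endpoints: since `|x - 1| + |x| ≥ 1`, the power mean
inequality gives `1 ≤ 2 ^ (r - 1) * (|x - 1| ^ r + |x| ^ r)`. Summing, the edge sum is at most
`2 ^ (r - 1)` times the weighted vertex sum.
-/

open ENNReal

theorem Real.rpow_add_le_mul_rpow_add_rpow {a b r : ℝ} (ha : 0 ≤ a) (hb : 0 ≤ b) (hr : 1 ≤ r) :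
    (a + b) ^ r ≤ 2 ^ (r - 1) * (a ^ r + b ^ r) := by
  lift a to NNReal using ha
  lift b to NNReal using hb
  exact_mod_cast NNReal.rpow_add_le_mul_rpow_add_rpow a b hr

theorem min_le_two_rpow_mul_abs_rpow {r p q : ℝ} (x : ℝ) (hr : 1 ≤ r) (hp : 0 ≤ p) (hq : 0 ≤ q) :
    min p q ≤ 2 ^ (r - 1) * (|x - 1| ^ r * p + |x| ^ r * q) := by
  have hsum : 1 ≤ |x - 1| + |x| := by linarith [le_abs_self x, neg_le_abs (x - 1)]
  have hweight : 1 ≤ 2 ^ (r - 1) * (|x - 1| ^ r + |x| ^ r) :=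
    (Real.one_le_rpow hsum (by linarith)).trans
      (Real.rpow_add_le_mul_rpow_add_rpow (abs_nonneg _) (abs_nonneg _) hr)
  have hmin : 0 ≤ min p q := le_min hp hq
  calc min p q ≤ 2 ^ (r - 1) * (|x - 1| ^ r + |x| ^ r) * min p q :=
        le_mul_of_one_le_left hmin hweight
    _ = 2 ^ (r - 1) * (|x - 1| ^ r * min p q + |x| ^ r * min p q) := by ring
    _ ≤ 2 ^ (r - 1) * (|x - 1| ^ r * p + |x| ^ r * q) := by
      gcongr
      exacts [min_le_left p q, min_le_right p q]

open Classical in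
theorem ENNReal.tsum_comp_add_eq_tsum {α β : Type*} {e : α → β} (he : Function.Injective e) {b : β}
    (hrange : Set.range e = {b}ᶜ) (g : β → ℝ≥0∞) : ∑' n, g (e n) + g b = ∑' k, g k := by
  have hsupport : Function.support (fun k => if k = b then 0 else g k) ⊆ Set.range e := by
    intro k hk
    rw [hrange]
    rintro rfl
    simp at hk
  rw [ENNReal.tsum_eq_add_tsum_ite b, add_comm, ← he.tsum_eq hsupport]
  congr 2 with n
  exact (if_neg (hrange.subset (Set.mem_range_self n))).symm

def edgeToVertex (N n : ℤ) : ℤ := if n ≤ N then n - 1 else n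

theorem edgeToVertex_injective (N : ℤ) : Function.Injective (edgeToVertex N) := by
  intro m n h
  simp only [edgeToVertex] at h
  split_ifs at h <;> omega

theorem range_edgeToVertex (N : ℤ) : Set.range (edgeToVertex N) = {N}ᶜ := by
  ext k
  simp only [Set.mem_range, Set.mem_compl_iff, Set.mem_singleton_iff, edgeToVertex]
  constructor
  · rintro ⟨n, rfl⟩
    split_ifs <;> omega
  · intro hk
    rcases lt_or_gt_of_ne hk with hlt | hgt
    · exact ⟨k + 1, by rw [if_pos (by omega)]; omega⟩
    · exact ⟨k, by rw [if_neg (by omega)]⟩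

theorem edgeToVertex_le_or_le (N n : ℤ) (hn : n ≠ N) :
    edgeToVertex N n ≤ N - 2 ∨ N + 1 ≤ edgeToVertex N n := by
  unfold edgeToVertex
  split_ifs <;> omega

theorem min_le_edgeToVertex {β : Type*} [LinearOrder β] (p : ℤ → β) (N n : ℤ) :
    min (p (n - 1)) (p n) ≤ p (edgeToVertex N n) := by
  unfold edgeToVertex
  split_ifs
  exacts [min_le_left _ _, min_le_right _ _]

theorem one_le_abs_add_intCast {b : ℝ} {k : ℤ} (hk : k ≤ ⌈-b⌉ - 2 ∨ ⌈-b⌉ + 1 ≤ k) :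
    1 ≤ |b + k| := by
  have hle := Int.le_ceil (-b)
  have hlt := Int.ceil_lt_add_one (-b)
  rcases hk with hk | hk
  · have : (k : ℝ) ≤ ⌈-b⌉ - 2 := by exact_mod_cast hk
    rw [abs_of_neg (by linarith)]
    linarith
  · have : (⌈-b⌉ : ℝ) + 1 ≤ k := by exact_mod_cast hk
    rw [abs_of_pos (by linarith)]
    linarith

section

variable {r b : ℝ} {p : ℤ → ℝ}

theorem min_le_rpow_mul_edgeToVertex (hr : 1 ≤ r) (hp : ∀ n, 0 ≤ p n) {n : ℤ} (hn : n ≠ ⌈-b⌉) :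
    min (p (n - 1)) (p n) ≤ |b + edgeToVertex ⌈-b⌉ n| ^ r * p (edgeToVertex ⌈-b⌉ n) :=
  (min_le_edgeToVertex p _ n).trans <| le_mul_of_one_le_left (hp _) <|
    Real.one_le_rpow (one_le_abs_add_intCast (edgeToVertex_le_or_le _ n hn)) (by linarith)

theorem min_le_two_rpow_mul_edgeToVertex_ceil (hr : 1 ≤ r) (hp : ∀ n, 0 ≤ p n) :
    min (p (⌈-b⌉ - 1)) (p ⌈-b⌉) ≤ 2 ^ (r - 1) * (|b + edgeToVertex ⌈-b⌉ ⌈-b⌉| ^ r *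
      p (edgeToVertex ⌈-b⌉ ⌈-b⌉) + |b + ⌈-b⌉| ^ r * p ⌈-b⌉) := by
  have hcast : b + ((⌈-b⌉ - 1 : ℤ) : ℝ) = b + ⌈-b⌉ - 1 := by push_cast; ring
  rw [edgeToVertex, if_pos le_rfl, hcast]
  exact min_le_two_rpow_mul_abs_rpow _ hr (hp _) (hp _)

end

theorem stmt_4 (r : ℝ) (hr : 1 ≤ r) (b : ℝ) (p : ℤ → ℝ) (hp : ∀ n, 0 ≤ p n) :
    ENNReal.ofReal (1 / 2) * ∑' n : ℤ, ENNReal.ofReal (min (p (n - 1)) (p n)) ≤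
      ENNReal.ofReal ((2 : ℝ) ^ (r - 2)) *
        ∑' n : ℤ, ENNReal.ofReal (|b + (n : ℝ)| ^ r * p n) := by
  set N := ⌈-b⌉
  set e := edgeToVertex N
  set c := ENNReal.ofReal (2 ^ (r - 1))
  set g : ℤ → ℝ≥0∞ := fun k => ENNReal.ofReal (|b + k| ^ r * p k)
  have hg (k : ℤ) : 0 ≤ |b + k| ^ r * p k := by
    have := hp k; positivity
  have hedge (n : ℤ) : ENNReal.ofReal (min (p (n - 1)) (p n)) ≤
      c * g (e n) + if n = N then c * g N else 0 := by
    split_ifs with hn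
    · subst hn
      rw [← mul_add, ← ENNReal.ofReal_add (hg _) (hg _), ← ENNReal.ofReal_mul (by positivity)]
      exact ENNReal.ofReal_le_ofReal (min_le_two_rpow_mul_edgeToVertex_ceil hr hp)
    · have hc : 1 ≤ c := ENNReal.one_le_ofReal.2 (Real.one_le_rpow (by norm_num) (by linarith))
      rw [add_zero]
      exact (ENNReal.ofReal_le_ofReal (min_le_rpow_mul_edgeToVertex hr hp hn)).trans
        (le_mul_of_one_le_left (by positivity) hc)
  have hhalf : ENNReal.ofReal (1 / 2) * c = ENNReal.ofReal (2 ^ (r - 2)) := by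
    rw [← ENNReal.ofReal_mul (by norm_num), show r - 1 = r - 2 + 1 by ring,
      Real.rpow_add_one two_ne_zero]
    ring_nf
  calc ENNReal.ofReal (1 / 2) * ∑' n, ENNReal.ofReal (min (p (n - 1)) (p n))
      ≤ ENNReal.ofReal (1 / 2) * ∑' n, (c * g (e n) + if n = N then c * g N else 0) := by
        gcongr with n
        exact hedge n
    _ = ENNReal.ofReal (1 / 2) * c * (∑' n, g (e n) + g N) := by
        rw [ENNReal.tsum_add, ENNReal.tsum_mul_left, tsum_ite_eq, mul_assoc, ← mul_add]
    _ = ENNReal.ofReal (2 ^ (r - 2)) * ∑' n, g n := by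
        rw [ENNReal.tsum_comp_add_eq_tsum (edgeToVertex_injective N) (range_edgeToVertex N), hhalf]
end

section
/- Let r ≥ 1 and t ≥ 0 be real. Then the function a ↦ [1 + (1+a)t]^{−r} · ([1 + (2+a)t]^{r+1} − [1 + a·t]^{r+1}) is nonincreasing in a on [0, ∞). -/
/-!
Substituting `u = 1 + (1 + a) t`, the function becomes
`g u = u^(-r) ((u + t)^(r+1) - (u - t)^(r+1))`, and with `x = u + t`, `y = u - t` the sign of `g'`
is that of `(r + 1) (x + y) (x^r - y^r) - 2 r (x^(r+1) - y^(r+1))`. This vanishes at `x = y`, and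
its derivative in `x` is `-(r + 1)` times the gap between `y^r` and the tangent line of the convex
function `s ↦ s^r` at `x`, so it is nonpositive for `x ≥ y`.
-/

open Real Set

theorem mul_rpow_sub_one_mul_le {r x y : ℝ} (hr : 1 ≤ r) (hx : 0 < x) (hy : 0 ≤ y) :
    r * x ^ (r - 1) * y ≤ (r - 1) * x ^ r + y ^ r := by
  have hbern := one_add_mul_self_le_rpow_one_add (s := y / x - 1)
    (by linarith [div_nonneg hy hx.le]) hr
  rw [add_sub_cancel, div_rpow hy hx.le, le_div_iff₀ (rpow_pos_of_pos hx r)] at hbern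
  have hxr : x ^ r = x ^ (r - 1) * x := by rw [← rpow_add_one hx.ne', sub_add_cancel]
  calc r * x ^ (r - 1) * y = (1 + r * (y / x - 1)) * x ^ r + (r - 1) * x ^ r := by
        rw [hxr]; field_simp; ring
    _ ≤ (r - 1) * x ^ r + y ^ r := by linarith

theorem mul_add_mul_rpow_sub_rpow_le {r x y : ℝ} (hr : 1 ≤ r) (hy : 0 ≤ y) (hyx : y ≤ x) :
    (r + 1) * (x + y) * (x ^ r - y ^ r) ≤ 2 * r * (x ^ (r + 1) - y ^ (r + 1)) := by
  let F : ℝ → ℝ := fun x =>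
    2 * r * (x ^ (r + 1) - y ^ (r + 1)) - (r + 1) * (x + y) * (x ^ r - y ^ r)
  have hF : MonotoneOn F (Ici y) := by
    refine monotoneOn_of_hasDerivWithinAt_nonneg (convex_Ici y) ?_ (f' := fun x =>
      (r + 1) * ((r - 1) * x ^ r + y ^ r - r * x ^ (r - 1) * y)) ?_ ?_
    · have hcont := continuous_rpow_const (by linarith : (0:ℝ) ≤ r)
      have hcont' := continuous_rpow_const (by linarith : (0:ℝ) ≤ r + 1)
      fun_prop
    · intro x hx
      rw [interior_Ici] at hx
      have hx0 : x ≠ 0 := (hy.trans_lt hx).ne'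
      have h1 := hasDerivAt_rpow_const (p := r + 1) (Or.inl hx0)
      have h2 := hasDerivAt_rpow_const (p := r) (Or.inl hx0)
      refine ((((h1.sub_const (y ^ (r + 1))).const_mul (2 * r)).sub
        ((((hasDerivAt_id x).add_const y).const_mul (r + 1)).mul
          (h2.sub_const (y ^ r)))).congr_deriv ?_).hasDerivWithinAt
      have hxr : x ^ (r - 1) * x = x ^ r := by rw [← rpow_add_one hx0, sub_add_cancel]
      rw [add_sub_cancel_right, id]
      linear_combination (-(r + 1) * r) * hxr
    · intro x hx
      rw [interior_Ici] at hx
      have htangent := mul_rpow_sub_one_mul_le hr (hy.trans_lt hx) hy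
      exact mul_nonneg (by linarith) (by linarith)
  have hFx := hF self_mem_Ici hyx hyx
  simp only [F, sub_self, mul_zero] at hFx
  linarith

theorem antitoneOn_rpow_neg_mul_add_rpow_sub_sub_rpow {r t : ℝ} (hr : 1 ≤ r) (ht : 0 ≤ t) :
    AntitoneOn (fun u : ℝ => u ^ (-r) * ((u + t) ^ (r + 1) - (u - t) ^ (r + 1))) (Ioi t) := by
  have hderiv : ∀ u ∈ Ioi t, HasDerivAt
      (fun u : ℝ => u ^ (-r) * ((u + t) ^ (r + 1) - (u - t) ^ (r + 1)))
      (u ^ (-r - 1) * ((r + 1) * u * ((u + t) ^ r - (u - t) ^ r)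
        - r * ((u + t) ^ (r + 1) - (u - t) ^ (r + 1)))) u := by
    intro u hu
    have hu0 : u ≠ 0 := (ht.trans_lt hu).ne'
    have hA := hasDerivAt_rpow_const (p := -r) (Or.inl hu0)
    have hp : 1 ≤ r + 1 := by linarith
    have hX := ((hasDerivAt_id' u).add_const t).rpow_const (Or.inr hp)
    have hY := ((hasDerivAt_id' u).sub_const t).rpow_const (Or.inr hp)
    refine (hA.mul (hX.sub hY)).congr_deriv ?_
    have hur : u ^ (-r - 1) * u = u ^ (-r) := by rw [← rpow_add_one hu0, sub_add_cancel]
    rw [add_sub_cancel_right, Pi.sub_apply]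
    linear_combination (-(r + 1) * ((u + t) ^ r - (u - t) ^ r)) * hur
  refine antitoneOn_of_hasDerivWithinAt_nonpos (convex_Ioi t)
    (fun u hu => (hderiv u hu).continuousAt.continuousWithinAt)
    (fun u hu => (hderiv u (interior_subset hu)).hasDerivWithinAt) fun u hu => ?_
  rw [interior_Ioi] at hu
  have hkey := mul_add_mul_rpow_sub_rpow_le (x := u + t) (y := u - t) hr
    (by linarith [mem_Ioi.mp hu]) (by linarith)
  refine mul_nonpos_of_nonneg_of_nonpos (rpow_nonneg (ht.trans hu.le) _) ?_
  linarith

theorem stmt_6 (r t : ℝ) (hr : 1 ≤ r) (ht : 0 ≤ t) :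
    AntitoneOn (fun a : ℝ =>
      (1 + (1 + a) * t) ^ (-r) *
        ((1 + (2 + a) * t) ^ (r + 1) - (1 + a * t) ^ (r + 1)))
      (Set.Ici 0) := by
  have hshift : (fun a : ℝ => (1 + (1 + a) * t) ^ (-r) *
        ((1 + (2 + a) * t) ^ (r + 1) - (1 + a * t) ^ (r + 1))) =
      (fun u : ℝ => u ^ (-r) * ((u + t) ^ (r + 1) - (u - t) ^ (r + 1))) ∘
        fun a => 1 + (1 + a) * t := by
    funext a
    simp only [Function.comp_apply]
    ring_nf
  rw [hshift]
  refine (antitoneOn_rpow_neg_mul_add_rpow_sub_sub_rpow hr ht).comp_MonotoneOn ?_ ?_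
  · exact fun a _ b _ hab => by gcongr
  · intro a ha
    simp only [mem_Ioi]
    nlinarith [mem_Ici.mp ha]
end

section
/- Let r ≥ 1 and let real a, t ≥ 0. Then [1+(3+a)t]^r·([1+(2+a)t]^{r+1} − [1+at]^{r+1}) ≥ [1+(1+a)t]^r·([1+(4+a)t]^{r+1} − [1+(2+a)t]^{r+1}). -/
/-!
Put `A = 1 + a t`, `b = A + t`, `d = A + 3t` and `ψ_c(x) = (c + x)^(r+1) - (c - x)^(r+1)`; the claim
is `b^r ψ_d(t) ≤ d^r ψ_b(t)`. Both sides vanish at `x = 0`, and `ψ_c'(x) = (r + 1) c^r φ(x / c)`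
with `φ(y) = (1 + y)^r + (1 - y)^r`. By convexity of `y ↦ y^r`, `φ` is increasing on `[0, 1]`, so
`φ(x / d) ≤ φ(x / b)`: the derivative of `d^r ψ_b - b^r ψ_d` is nonnegative on `[0, b]`.
-/

open Set

theorem ConvexOn.map_add_add_map_sub_le {s : Set ℝ} {f : ℝ → ℝ} (hf : ConvexOn ℝ s f)
    {m y z : ℝ} (hmz : m + z ∈ s) (hmz' : m - z ∈ s) (hy : 0 ≤ y) (hyz : y ≤ z) :
    f (m + y) + f (m - y) ≤ f (m + z) + f (m - z) := by
  obtain rfl | hyz := hyz.eq_or_lt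
  · rfl
  have hz : 0 < z := hy.trans_lt hyz
  set u := (z + y) / (2 * z) with hu_def
  set v := (z - y) / (2 * z) with hv_def
  have hu : 0 ≤ u := by positivity
  have hv : 0 ≤ v := div_nonneg (by linarith) (by positivity)
  have huv : u + v = 1 := by rw [hu_def, hv_def]; field_simp; ring
  have hplus : u * (m + z) + v * (m - z) = m + y := by rw [hu_def, hv_def]; field_simp; ring
  have hminus : v * (m + z) + u * (m - z) = m - y := by rw [hu_def, hv_def]; field_simp; ring
  have h₁ := hf.2 hmz hmz' hu hv huv
  have h₂ := hf.2 hmz hmz' hv hu (by rw [add_comm, huv])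
  simp only [smul_eq_mul, hplus, hminus] at h₁ h₂
  linear_combination h₁ + h₂ + (f (m + z) + f (m - z)) * huv

theorem rpow_mul_rpow_add_add_rpow_sub_le {r b d s : ℝ} (hr : 1 ≤ r) (hb : 0 < b) (hbd : b ≤ d)
    (hs : 0 ≤ s) (hsb : s ≤ b) :
    b ^ r * ((d + s) ^ r + (d - s) ^ r) ≤ d ^ r * ((b + s) ^ r + (b - s) ^ r) := by
  have hd : 0 < d := hb.trans_le hbd
  have scale : ∀ c, 0 < c → s ≤ c →
      (1 + s / c) ^ r + (1 - s / c) ^ r = ((c + s) ^ r + (c - s) ^ r) / c ^ r := by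
    intro c hc hsc
    rw [one_add_div hc.ne', one_sub_div hc.ne', Real.div_rpow (by linarith) hc.le,
      Real.div_rpow (by linarith) hc.le, add_div]
  have key := (convexOn_rpow hr).map_add_add_map_sub_le (m := 1)
    (mem_Ici.2 (by positivity : (0 : ℝ) ≤ 1 + s / b))
    (mem_Ici.2 (by rw [sub_nonneg]; exact div_le_one_of_le₀ hsb hb.le))
    (by positivity : 0 ≤ s / d) (div_le_div_of_nonneg_left hs hb hbd)
  rw [scale d hd (hsb.trans hbd), scale b hb hsb,
    div_le_div_iff₀ (Real.rpow_pos_of_pos hd r) (Real.rpow_pos_of_pos hb r)] at key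
  linarith

theorem hasDerivAt_rpow_add_sub_rpow_sub {p : ℝ} (hp : 0 ≤ p) (c s : ℝ) :
    HasDerivAt (fun x => (c + x) ^ (p + 1) - (c - x) ^ (p + 1))
      ((p + 1) * ((c + s) ^ p + (c - s) ^ p)) s := by
  have hp1 : 1 ≤ p + 1 := by linarith
  refine ((((hasDerivAt_id s).const_add c).rpow_const (Or.inr hp1)).sub
    (((hasDerivAt_id s).const_sub c).rpow_const (Or.inr hp1))).congr_deriv ?_
  simp only [id, add_sub_cancel_right]
  ring

theorem rpow_mul_rpow_add_sub_rpow_sub_le {r b d s : ℝ} (hr : 1 ≤ r) (hb : 0 < b) (hbd : b ≤ d)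
    (hs : 0 ≤ s) (hsb : s ≤ b) :
    b ^ r * ((d + s) ^ (r + 1) - (d - s) ^ (r + 1)) ≤
      d ^ r * ((b + s) ^ (r + 1) - (b - s) ^ (r + 1)) := by
  have hr0 : 0 ≤ r := by linarith
  set F : ℝ → ℝ := fun x => d ^ r * ((b + x) ^ (r + 1) - (b - x) ^ (r + 1)) -
    b ^ r * ((d + x) ^ (r + 1) - (d - x) ^ (r + 1))
  have hF : ∀ x, HasDerivAt F ((r + 1) * (d ^ r * ((b + x) ^ r + (b - x) ^ r) -
      b ^ r * ((d + x) ^ r + (d - x) ^ r))) x := fun x =>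
    (((hasDerivAt_rpow_add_sub_rpow_sub hr0 b x).const_mul (d ^ r)).sub
      ((hasDerivAt_rpow_add_sub_rpow_sub hr0 d x).const_mul (b ^ r))).congr_deriv (by ring)
  have hmono : MonotoneOn F (Icc 0 b) := by
    refine monotoneOn_of_hasDerivWithinAt_nonneg (convex_Icc 0 b)
      (fun x _ => (hF x).continuousAt.continuousWithinAt) (fun x _ => (hF x).hasDerivWithinAt)
      fun x hx => ?_
    rw [interior_Icc] at hx
    exact mul_nonneg (by linarith) (sub_nonneg.2
      (rpow_mul_rpow_add_add_rpow_sub_le hr hb hbd hx.1.le hx.2.le))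
  have h := hmono ⟨le_rfl, hb.le⟩ ⟨hs, hsb⟩ hs
  simp only [F, add_zero, sub_zero, sub_self, mul_zero] at h
  linarith

theorem stmt_7 (r a t : ℝ) (hr : 1 ≤ r) (ha : 0 ≤ a) (ht : 0 ≤ t) :
    (1 + (1 + a) * t) ^ r *
        ((1 + (4 + a) * t) ^ (r + 1) - (1 + (2 + a) * t) ^ (r + 1)) ≤
      (1 + (3 + a) * t) ^ r *
        ((1 + (2 + a) * t) ^ (r + 1) - (1 + a * t) ^ (r + 1)) := by
  have h := rpow_mul_rpow_add_sub_rpow_sub_le (b := 1 + (1 + a) * t) (d := 1 + (3 + a) * t)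
    (s := t) hr (by positivity) (by nlinarith) ht (by nlinarith)
  convert h using 4 <;> ring
end

section
/- Let r ∈ (0,1) and let y ≥ 0, k ≥ y be integers. Then (2y+1)^r · (k − y) ≤ ∑_{i=1}^k i^r. -/
/-!
Write `k = y + m`. The function `f i = i ^ r` on `ℕ` is monotone, subadditive and vanishes at `0`.
Pair the top terms `f (y + 1 + j)`, `j < m`, with the reflected bottom terms `f (y - j)`; with
truncated subtraction these are `f 0 = 0` once `j ≥ y`, so they add up to at most `∑_{i ≤ y} f i`.
Since `(y + 1 + j) + (y - j) ≥ 2y + 1`, each pair satisfies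
`f (2y + 1) ≤ f (y + 1 + j) + f (y - j)`, and summing over `j < m` gives
`m f (2y + 1) ≤ ∑_{i ≤ k} f i`.
-/

open Finset

section Subadditive

variable {M : Type*} [AddCommMonoid M] [PartialOrder M] [IsOrderedAddMonoid M] {f : ℕ → M}

theorem sum_range_tsub_le (hf : ∀ i, 0 ≤ f i) (h0 : f 0 = 0) (y m : ℕ) :
    ∑ j ∈ range m, f (y - j) ≤ ∑ i ∈ range (y + 1), f i :=
  calc ∑ j ∈ range m, f (y - j)
      ≤ ∑ j ∈ range (max m (y + 1)), f (y - j) :=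
        sum_le_sum_of_subset_of_nonneg (range_subset_range.2 (le_max_left _ _))
          fun _ _ _ ↦ hf _
    _ = ∑ j ∈ range (y + 1), f (y - j) := by
        refine (sum_subset (range_subset_range.2 (le_max_right _ _)) fun j _ hj ↦ ?_).symm
        rw [mem_range, not_lt] at hj
        rw [Nat.sub_eq_zero_of_le (by omega), h0]
    _ = ∑ i ∈ range (y + 1), f i := by
        simpa using sum_range_reflect f (y + 1)

theorem nsmul_le_sum_range_of_monotone_of_subadditive (hmono : Monotone f)
    (hsub : ∀ a b, f (a + b) ≤ f a + f b) (h0 : f 0 = 0) (y m : ℕ) :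
    m • f (2 * y + 1) ≤ ∑ i ∈ range (y + 1 + m), f i := by
  have hf : ∀ i, 0 ≤ f i := fun i ↦ h0 ▸ hmono (Nat.zero_le i)
  have pair : ∀ j, f (2 * y + 1) ≤ f (y + 1 + j) + f (y - j) := fun j ↦
    (hmono (by omega : 2 * y + 1 ≤ (y + 1 + j) + (y - j))).trans (hsub _ _)
  calc m • f (2 * y + 1) = ∑ _j ∈ range m, f (2 * y + 1) := by rw [sum_const, card_range]
    _ ≤ ∑ j ∈ range m, (f (y + 1 + j) + f (y - j)) := sum_le_sum fun j _ ↦ pair j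
    _ = ∑ j ∈ range m, f (y + 1 + j) + ∑ j ∈ range m, f (y - j) := sum_add_distrib
    _ ≤ ∑ j ∈ range m, f (y + 1 + j) + ∑ i ∈ range (y + 1), f i := by
        gcongr
        exact sum_range_tsub_le hf h0 y m
    _ = ∑ i ∈ range (y + 1 + m), f i := by rw [add_comm, ← sum_range_add]

end Subadditive

theorem stmt_10 (r : ℝ) (hr0 : 0 < r) (hr1 : r < 1) (y k : ℕ) (hyk : y ≤ k) :
    (2 * (y : ℝ) + 1) ^ r * ((k : ℝ) - (y : ℝ)) ≤ ∑ i ∈ Finset.Icc 1 k, (i : ℝ) ^ r := by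
  set f : ℕ → ℝ := fun i ↦ (i : ℝ) ^ r
  have hmono : Monotone f := fun a b hab ↦
    Real.rpow_le_rpow (Nat.cast_nonneg a) (Nat.cast_le.2 hab) hr0.le
  have hsub : ∀ a b, f (a + b) ≤ f a + f b := fun a b ↦ by
    simpa [f] using Real.rpow_add_le_add_rpow (Nat.cast_nonneg a) (Nat.cast_nonneg b) hr0.le hr1.le
  have h0 : f 0 = 0 := by simp [f, Real.zero_rpow hr0.ne']
  obtain ⟨m, rfl⟩ := Nat.exists_eq_add_of_le hyk
  have hsum : ∑ i ∈ range (y + 1 + m), f i = ∑ i ∈ Icc 1 (y + m), f i := by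
    rw [show y + 1 + m = y + m + 1 by omega, range_eq_Ico, sum_eq_sum_Ico_succ_bot (Nat.succ_pos _),
      h0, zero_add, Nat.succ_eq_add_one, zero_add, Ico_add_one_right_eq_Icc]
  have key := nsmul_le_sum_range_of_monotone_of_subadditive hmono hsub h0 y m
  rw [hsum, nsmul_eq_mul] at key
  push_cast
  simpa [f, mul_comm] using key
end

section
/- For all integers k, y with 0 ≤ y ≤ k − 1, we have (2y+1)^2 (k − y) ≤ (3/10) k (k+1)(2k+1), with strict inequality unless k = 2 and y = 1. -/
lemma int_ineq (k y : ℤ) (hy0 : 0 ≤ y) (hy1 : y ≤ k - 1) :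
    10 * (2 * y + 1) ^ 2 * (k - y) ≤ 3 * k * (k + 1) * (2 * k + 1) ∧
    (¬(k = 2 ∧ y = 1) →
      10 * (2 * y + 1) ^ 2 * (k - y) < 3 * k * (k + 1) * (2 * k + 1)) := by
  rcases le_or_gt k 4 with hk | hk
  · have hk1 : 1 ≤ k := by omega
    interval_cases k <;> interval_cases y <;> simp_all <;> omega
  · have h1 : 0 ≤ (6 * y - 4 * k + 1) ^ 2 * (6 * y + 2 * k + 4) :=
      mul_nonneg (sq_nonneg _) (by omega)
    have h2 : 0 < (k - 4) * (k + 5) * (2 * k + 1) := mul_pos (mul_pos (by omega) (by omega)) (by omega)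
    constructor
    · nlinarith [h1, h2]
    · intro _
      nlinarith [h1, h2]

theorem stmt_12 (k y : ℤ) (hy0 : 0 ≤ y) (hy1 : y ≤ k - 1) :
    (2 * (y : ℝ) + 1) ^ 2 * ((k : ℝ) - (y : ℝ)) ≤
        (3 / 10) * (k : ℝ) * ((k : ℝ) + 1) * (2 * (k : ℝ) + 1) ∧
      (¬(k = 2 ∧ y = 1) →
        (2 * (y : ℝ) + 1) ^ 2 * ((k : ℝ) - (y : ℝ)) <
          (3 / 10) * (k : ℝ) * ((k : ℝ) + 1) * (2 * (k : ℝ) + 1)) := by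
  obtain ⟨h1, h2⟩ := int_ineq k y hy0 hy1
  constructor
  · have : ((10 * (2 * y + 1) ^ 2 * (k - y) : ℤ) : ℝ) ≤ ((3 * k * (k + 1) * (2 * k + 1) : ℤ) : ℝ) := by
      exact_mod_cast h1
    push_cast at this
    linarith
  · intro h
    have := h2 h
    have : ((10 * (2 * y + 1) ^ 2 * (k - y) : ℤ) : ℝ) < ((3 * k * (k + 1) * (2 * k + 1) : ℤ) : ℝ) := by
      exact_mod_cast this
    push_cast at this
    linarith
end

section
/- The function r ↦ 2·(r/(r+1))^r on (0,∞) is strictly log-convex and converges to 2/e as r → ∞. -/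
/-! Writing `log (2 * (r / (r + 1)) ^ r) = log 2 + r * (log r - log (r + 1))`, the second
derivative is `1 / r - 1 / (r + 1) - 1 / (r + 1) ^ 2 = 1 / (r * (r + 1) ^ 2) > 0`.
The limit is the reciprocal of `(1 + 1 / r) ^ r → e`. -/

open Real Filter Set Topology

theorem strictConvexOn_of_hasDerivAt2_pos {D : Set ℝ} (hD : Convex ℝ D) (hDo : IsOpen D)
    {f f' f'' : ℝ → ℝ} (hf : ∀ x ∈ D, HasDerivAt f (f' x) x)
    (hf' : ∀ x ∈ D, HasDerivAt f' (f'' x) x) (hf'' : ∀ x ∈ D, 0 < f'' x) :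
    StrictConvexOn ℝ D f := by
  refine strictConvexOn_of_deriv2_pos hD (fun x hx => (hf x hx).continuousAt.continuousWithinAt)
    fun x hx => ?_
  rw [hDo.interior_eq] at hx
  have hderiv : deriv f =ᶠ[𝓝 x] f' :=
    eventually_of_mem (hDo.mem_nhds hx) fun y hy => (hf y hy).deriv
  simpa only [Function.iterate_succ, Function.iterate_zero, Function.comp_apply, id_eq,
    hderiv.deriv_eq, (hf' x hx).deriv] using hf'' x hx

theorem hasDerivAt_mul_log_sub_log_add_one {x : ℝ} (hx : 0 < x) :
    HasDerivAt (fun r => r * (log r - log (r + 1))) (log x - log (x + 1) + (x + 1)⁻¹) x := by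
  have hlog : HasDerivAt (fun r => log r - log (r + 1)) (x⁻¹ - (x + 1)⁻¹) x :=
    (hasDerivAt_log hx.ne').sub ((hasDerivAt_log (by linarith)).comp_add_const x 1)
  refine ((hasDerivAt_id' x).mul hlog).congr_deriv ?_
  field_simp
  ring

theorem hasDerivAt_log_sub_log_add_one_add_inv {x : ℝ} (hx : 0 < x) :
    HasDerivAt (fun r => log r - log (r + 1) + (r + 1)⁻¹) (1 / (x * (x + 1) ^ 2)) x := by
  have hx1 : x + 1 ≠ 0 := by linarith
  refine (((hasDerivAt_log hx.ne').sub ((hasDerivAt_log hx1).comp_add_const x 1)).add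
    ((hasDerivAt_inv hx1).comp_add_const x 1)).congr_deriv ?_
  field_simp
  ring

theorem strictConvexOn_mul_log_sub_log_add_one :
    StrictConvexOn ℝ (Ioi 0) fun r : ℝ => r * (log r - log (r + 1)) :=
  strictConvexOn_of_hasDerivAt2_pos (convex_Ioi 0) isOpen_Ioi
    (fun _ hx => hasDerivAt_mul_log_sub_log_add_one hx)
    (fun _ hx => hasDerivAt_log_sub_log_add_one_add_inv hx)
    fun x (hx : 0 < x) => by positivity

theorem log_two_mul_div_add_one_rpow {r : ℝ} (hr : 0 < r) :
    log (2 * (r / (r + 1)) ^ r) = r * (log r - log (r + 1)) + log 2 := by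
  have hr1 : 0 < r + 1 := by linarith
  rw [log_mul two_ne_zero (rpow_pos_of_pos (div_pos hr hr1) r).ne', log_rpow (by positivity),
    log_div hr.ne' hr1.ne']
  ring

theorem tendsto_div_add_rpow_atTop (t : ℝ) :
    Tendsto (fun r : ℝ => (r / (r + t)) ^ r) atTop (𝓝 (exp (-t))) := by
  rw [exp_neg]
  refine ((tendsto_one_add_div_rpow_exp t).inv₀ (exp_ne_zero t)).congr' ?_
  filter_upwards [eventually_gt_atTop |t|] with r hr
  have hr0 : 0 < r := (abs_nonneg t).trans_lt hr
  have hrt : 0 < r + t := by linarith [neg_abs_le t]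
  have hbase : 1 + t / r = (r + t) / r := by field_simp
  rw [hbase, ← inv_rpow (by positivity), inv_div]

theorem stmt_14 :
    StrictConvexOn ℝ (Set.Ioi (0 : ℝ))
        (fun r : ℝ => Real.log (2 * (r / (r + 1)) ^ r)) ∧
      Filter.Tendsto (fun r : ℝ => 2 * (r / (r + 1)) ^ r) Filter.atTop
        (nhds (2 / Real.exp 1)) := by
  refine ⟨(strictConvexOn_mul_log_sub_log_add_one.add_const (log 2)).congr
    fun r hr => (log_two_mul_div_add_one_rpow hr).symm, ?_⟩
  rw [div_eq_mul_inv, ← exp_neg]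
  exact (tendsto_div_add_rpow_atTop 1).const_mul 2
end

section
/- Let r ∈ [2,∞), q, p ≥ 0 with q + p = 1, and let b = q^{1/(r−1)} / (q^{1/(r−1)} + p^{1/(r−1)}) (when q + p > 0). Then 2^{r−2}[(1−b)^r q + b^r p] ≥ p(1−p) ≥ min{(1−φ)q, φp} for every φ ∈ [0,1]. -/
/-!
Put `s = r - 1`, `a = q ^ (1/s)` and `c = p ^ (1/s)`, so that `a ^ s + c ^ s = 1` and
`b = a / (a + c)`. Then `(1 - b) ^ r q + b ^ r p = (a c) ^ s / (a + c) ^ s = p q / (a + c) ^ s`,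
and the power mean inequality `(a + c) ^ s ≤ 2 ^ (s - 1) (a ^ s + c ^ s) = 2 ^ (s - 1)` gives the
first bound. For the second, `φ p ≤ q p` if `φ ≤ q` and `(1 - φ) q ≤ p q` otherwise.
-/

open Real

lemma Real.rpow_add_le_two_rpow_mul_add_rpow {a c s : ℝ} (ha : 0 ≤ a) (hc : 0 ≤ c)
    (hs : 1 ≤ s) : (a + c) ^ s ≤ 2 ^ (s - 1) * (a ^ s + c ^ s) := by
  lift a to NNReal using ha
  lift c to NNReal using hc
  exact_mod_cast NNReal.rpow_add_le_mul_rpow_add_rpow a c hs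

lemma rpow_add_one_weighted_sum_eq {a c : ℝ} (s : ℝ) (ha : 0 < a) (hc : 0 < c) :
    (1 - a / (a + c)) ^ (s + 1) * a ^ s + (a / (a + c)) ^ (s + 1) * c ^ s
      = (a * c) ^ s / (a + c) ^ s := by
  have hac : 0 < a + c := add_pos ha hc
  rw [one_sub_div hac.ne', add_sub_cancel_left, div_rpow hc.le hac.le, div_rpow ha.le hac.le,
    rpow_add_one hc.ne', rpow_add_one ha.ne', rpow_add_one hac.ne', mul_rpow ha.le hc.le]
  field_simp
  ring

lemma mul_rpow_le_of_rpow_add_rpow_eq_one {a c s : ℝ} (ha : 0 < a) (hc : 0 < c) (hs : 1 ≤ s)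
    (hsum : a ^ s + c ^ s = 1) :
    (a * c) ^ s ≤
      2 ^ (s - 1) * ((1 - a / (a + c)) ^ (s + 1) * a ^ s + (a / (a + c)) ^ (s + 1) * c ^ s) := by
  have hac : 0 < (a + c) ^ s := rpow_pos_of_pos (add_pos ha hc) s
  have hmean : (a + c) ^ s ≤ 2 ^ (s - 1) := by
    simpa only [hsum, mul_one] using rpow_add_le_two_rpow_mul_add_rpow ha.le hc.le hs
  rw [rpow_add_one_weighted_sum_eq s ha hc, ← mul_div_assoc, le_div_iff₀ hac, mul_comm]
  gcongr

lemma mul_le_two_rpow_mul_weighted_rpow_sum {r q p : ℝ} (hr : 2 ≤ r) (hq : 0 < q) (hp : 0 < p)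
    (hqp : q + p = 1) :
    p * q ≤ 2 ^ (r - 2) *
      ((1 - q ^ (1 / (r - 1)) / (q ^ (1 / (r - 1)) + p ^ (1 / (r - 1)))) ^ r * q +
        (q ^ (1 / (r - 1)) / (q ^ (1 / (r - 1)) + p ^ (1 / (r - 1)))) ^ r * p) := by
  have hs : r - 1 ≠ 0 := by linarith
  have hq_eq : (q ^ (1 / (r - 1))) ^ (r - 1) = q := by rw [one_div, rpow_inv_rpow hq.le hs]
  have hp_eq : (p ^ (1 / (r - 1))) ^ (r - 1) = p := by rw [one_div, rpow_inv_rpow hp.le hs]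
  have key := mul_rpow_le_of_rpow_add_rpow_eq_one (s := r - 1)
    (rpow_pos_of_pos hq (1 / (r - 1))) (rpow_pos_of_pos hp (1 / (r - 1))) (by linarith)
    (by rw [hq_eq, hp_eq, hqp])
  rw [mul_rpow (rpow_pos_of_pos hq _).le (rpow_pos_of_pos hp _).le, hq_eq, hp_eq,
    sub_add_cancel, sub_sub, one_add_one_eq_two] at key
  linarith

lemma min_le_mul_of_add_eq_one {q p : ℝ} (φ : ℝ) (hq : 0 ≤ q) (hp : 0 ≤ p)
    (hqp : q + p = 1) : min ((1 - φ) * q) (φ * p) ≤ p * q := by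
  rcases le_total φ q with h | h
  · exact (min_le_right _ _).trans (by nlinarith)
  · exact (min_le_left _ _).trans (by nlinarith)

theorem stmt_17 (r q p : ℝ) (hr : 2 ≤ r) (hq : 0 ≤ q) (hp : 0 ≤ p)
    (hqp : q + p = 1) (b : ℝ)
    (hb : b = q ^ (1 / (r - 1)) / (q ^ (1 / (r - 1)) + p ^ (1 / (r - 1)))) :
    p * (1 - p) ≤ 2 ^ (r - 2) * ((1 - b) ^ r * q + b ^ r * p) ∧
      ∀ φ : ℝ, 0 ≤ φ → φ ≤ 1 → min ((1 - φ) * q) (φ * p) ≤ p * (1 - p) := by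
  rw [show 1 - p = q by linarith]
  refine ⟨?_, fun φ _ _ => min_le_mul_of_add_eq_one φ hq hp hqp⟩
  have hb0 : 0 ≤ b := hb ▸ by positivity
  have hb1 : b ≤ 1 :=
    hb ▸ div_le_one_of_le₀ (le_add_of_nonneg_right (by positivity)) (by positivity)
  have hrhs : 0 ≤ 2 ^ (r - 2) * ((1 - b) ^ r * q + b ^ r * p) :=
    mul_nonneg (by positivity) (add_nonneg (mul_nonneg (rpow_nonneg (sub_nonneg.2 hb1) r) hq)
      (mul_nonneg (rpow_nonneg hb0 r) hp))
  rcases hp.eq_or_lt with rfl | hp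
  · rwa [zero_mul]
  rcases hq.eq_or_lt with rfl | hq
  · rwa [mul_zero]
  exact hb ▸ mul_le_two_rpow_mul_weighted_rpow_sum hr hq hp hqp
end
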